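/- arXiv:1612.02962 — 2 statements merged into one kernel-verified Lean document; each statement's English description precedes it below -/
import Mathlib

section
/- RAP' counter requirement for heavy-tailed Zipf streams (the positive half of Theorem 1 of the paper): for every fixed α with 0 < α < 1 and every fixed positive integer k, there exist a constant C > 0 and an integer D₀ such that for every integer D ≥ D₀ there exist an integer m with k < m ≤ C · D^{(1−α)/(1+α)} and a real number P with 0 < P ≤ 1 satisfying both RAP' convergence constraints: m > k · P^{−1/α} and m > k + k^α ( Γ_α(m) − Γ_α(k) + P · (Γ_α(D) − Γ_α(m)) ). -/
/-!
By concavity of `x ↦ x ^ (1 - α)`, `Γ_α(n) ≤ n ^ (1 - α) / (1 - α)`. Take `m = ⌈A D ^ β⌉` with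
`β = (1 - α) / (1 + α)` and `P = (1 - α) m / (4 k ^ α D ^ (1 - α))`, the admission probability for
which the tail bound `k ^ α P Γ_α(D) ≤ k ^ α P D ^ (1 - α) / (1 - α)` equals `m / 4`. For large `D`
also `k ≤ m / 4` and `k ^ α Γ_α(m) ≤ m / 4`, which gives the second constraint. The first one says
`P m ^ α > k ^ α`, i.e. `(1 - α) m ^ (1 + α) > 4 k ^ (2α) D ^ (1 - α)`; the exponent `β` is exactly
the one for which this holds once `A` is large, and `P ≤ 1` for large `D` because `β < 1 - α`.
-/

open Real Filter

/-- `zipfGamma α n = Σ_{i=1}^{n} i^(-α)`. -/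
noncomputable def zipfGamma (α : ℝ) (n : ℕ) : ℝ :=
  ∑ i ∈ Finset.Icc 1 n, (i : ℝ) ^ (-α)

lemma mul_rpow_sub_one_le_add_one_rpow_sub_rpow {p : ℝ} (hp0 : 0 ≤ p) (hp1 : p ≤ 1) {a : ℝ}
    (ha : 0 ≤ a) : p * (a + 1) ^ (p - 1) ≤ (a + 1) ^ p - a ^ p := by
  have ha1 : 0 < a + 1 := by linarith
  have hs : -1 ≤ -(a + 1)⁻¹ := neg_le_neg (inv_le_one_of_one_le₀ (by linarith))
  have hsplit : a = (a + 1) * (1 + -(a + 1)⁻¹) := by field_simp; ring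
  calc p * (a + 1) ^ (p - 1) = (a + 1) ^ p - (a + 1) ^ p * (1 + p * -(a + 1)⁻¹) := by
        rw [rpow_sub_one ha1.ne']; ring
    _ ≤ (a + 1) ^ p - (a + 1) ^ p * (1 + -(a + 1)⁻¹) ^ p := by
        gcongr; exact rpow_one_add_le_one_add_mul_self hs hp0 hp1
    _ = (a + 1) ^ p - a ^ p := by rw [← mul_rpow ha1.le (by linarith), ← hsplit]

lemma zipfGamma_nonneg (α : ℝ) (n : ℕ) : 0 ≤ zipfGamma α n :=
  Finset.sum_nonneg fun i _ => rpow_nonneg i.cast_nonneg _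

lemma zipfGamma_succ (α : ℝ) (n : ℕ) :
    zipfGamma α (n + 1) = zipfGamma α n + ((n : ℝ) + 1) ^ (-α) := by
  rw [zipfGamma, zipfGamma, Finset.sum_Icc_succ_top (by omega), Nat.cast_succ]

lemma zipfGamma_le_rpow_div {α : ℝ} (h0 : 0 ≤ α) (h1 : α < 1) (n : ℕ) :
    zipfGamma α n ≤ (n : ℝ) ^ (1 - α) / (1 - α) := by
  have hp : 0 < 1 - α := by linarith
  induction n with
  | zero => simp [zipfGamma, zero_rpow hp.ne']
  | succ n ih =>
    have step := mul_rpow_sub_one_le_add_one_rpow_sub_rpow hp.le (by linarith) n.cast_nonneg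
    rw [sub_sub_cancel_left] at step
    rw [le_div_iff₀ hp] at ih ⊢
    rw [zipfGamma_succ, Nat.cast_succ]
    linarith

lemma zipfGamma_sub_add_mul_sub_le {α P : ℝ} (h0 : 0 ≤ α) (h1 : α < 1) (hP : 0 ≤ P)
    (k m D : ℕ) :
    zipfGamma α m - zipfGamma α k + P * (zipfGamma α D - zipfGamma α m) ≤
      (m : ℝ) ^ (1 - α) / (1 - α) + P * ((D : ℝ) ^ (1 - α) / (1 - α)) := by
  have := mul_le_mul_of_nonneg_left (zipfGamma_le_rpow_div h0 h1 D) hP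
  have := mul_nonneg hP (zipfGamma_nonneg α m)
  linarith [zipfGamma_le_rpow_div h0 h1 m, zipfGamma_nonneg α k]

def RapPrimeConstraints (α : ℝ) (k m D : ℕ) (P : ℝ) : Prop :=
  (m : ℝ) > k * P ^ (-(1 / α)) ∧
    (m : ℝ) > k + (k : ℝ) ^ α *
      (zipfGamma α m - zipfGamma α k + P * (zipfGamma α D - zipfGamma α m))

lemma mul_rpow_neg_one_div_lt_of_rpow_lt {α k m P : ℝ} (hα : 0 < α) (hk : 0 ≤ k) (hm : 0 ≤ m)
    (hP : 0 < P) (h : k ^ α < P * m ^ α) : k * P ^ (-(1 / α)) < m := by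
  have hk' : k < P ^ (1 / α) * m :=
    calc k = (k ^ α) ^ (1 / α) := by rw [← rpow_mul hk, mul_one_div_cancel hα.ne', rpow_one]
      _ < (P * m ^ α) ^ (1 / α) := rpow_lt_rpow (by positivity) h (by positivity)
      _ = P ^ (1 / α) * m := by
        rw [mul_rpow hP.le (by positivity), ← rpow_mul hm, mul_one_div_cancel hα.ne', rpow_one]
  rwa [rpow_neg hP.le, ← div_eq_mul_inv, div_lt_iff₀ (by positivity), mul_comm]

lemma exists_rapPrimeConstraints_of_le {α : ℝ} (h0 : 0 < α) (h1 : α < 1) {k m D : ℕ}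
    (hkm : 4 * k ≤ m) (hm : 4 * (k : ℝ) ^ α ≤ (1 - α) * (m : ℝ) ^ α)
    (hmD : 4 * ((k : ℝ) ^ α) ^ 2 * (D : ℝ) ^ (1 - α) < (1 - α) * (m : ℝ) ^ (1 + α))
    (hDm : (1 - α) * m ≤ 4 * (k : ℝ) ^ α * (D : ℝ) ^ (1 - α)) :
    ∃ P, 0 < P ∧ P ≤ 1 ∧ RapPrimeConstraints α k m D P := by
  set p := 1 - α with hp_def
  set K := (k : ℝ) ^ α
  have hp : 0 < p := by linarith
  have hm0 : (0 : ℝ) < m := by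
    have hm1α : 0 < (m : ℝ) ^ (1 + α) :=
      pos_of_mul_pos_right (lt_of_le_of_lt (by positivity) hmD) hp.le
    refine Nat.cast_pos.mpr (Nat.pos_of_ne_zero fun h => ?_)
    simp [h, zero_rpow (by linarith : 1 + α ≠ 0)] at hm1α
  have hKD : 0 < K * (D : ℝ) ^ p := by nlinarith
  have hK : 0 < K := pos_of_mul_pos_left hKD (rpow_nonneg D.cast_nonneg p)
  have hD : 0 < (D : ℝ) ^ p := pos_of_mul_pos_right hKD hK.le
  set P := p * m / (4 * K * (D : ℝ) ^ p) with hP_def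
  have hP : 0 < P := by positivity
  refine ⟨P, hP, ?_, ?_, ?_⟩
  · rw [div_le_one (by positivity)]; linarith
  · apply mul_rpow_neg_one_div_lt_of_rpow_lt h0 k.cast_nonneg hm0.le hP
    rw [rpow_add hm0, rpow_one] at hmD
    rw [div_mul_eq_mul_div, lt_div_iff₀ (by positivity)]
    nlinarith
  · have hΓ := zipfGamma_sub_add_mul_sub_le h0.le h1 hP.le k m D
    have hhead : K * ((m : ℝ) ^ p / p) ≤ m / 4 := by
      have : (m : ℝ) ^ α * (m : ℝ) ^ p = m := by
        rw [← rpow_add hm0, hp_def, add_sub_cancel, rpow_one]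
      rw [mul_div_assoc', div_le_div_iff₀ hp (by norm_num)]
      nlinarith [rpow_nonneg hm0.le p]
    have htail : K * (P * ((D : ℝ) ^ p / p)) = m / 4 := by
      rw [hP_def]; field_simp
    have hk : (4 * k : ℝ) ≤ m := by exact_mod_cast hkm
    show (m : ℝ) > k + K * _
    linarith [mul_le_mul_of_nonneg_left hΓ hK.le,
      mul_add K ((m : ℝ) ^ p / p) (P * ((D : ℝ) ^ p / p))]

lemma natCeil_mul_rpow_le {A β x : ℝ} (hA : 0 ≤ A) (hβ : 0 ≤ β) (hx : 1 ≤ x) :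
    (⌈A * x ^ β⌉₊ : ℝ) ≤ (A + 1) * x ^ β := by
  have := Nat.ceil_lt_add_one (mul_nonneg hA (rpow_nonneg (by linarith) β))
  nlinarith [one_le_rpow hx hβ]

lemma eventually_exists_rapPrimeConstraints {α : ℝ} (h0 : 0 < α) (h1 : α < 1) {k : ℕ}
    (hk : 0 < k) {A : ℝ} (hA0 : 0 < A) (hA : 4 * ((k : ℝ) ^ α) ^ 2 < (1 - α) * A ^ (1 + α)) :
    ∀ᶠ D : ℕ in atTop, k < ⌈A * (D : ℝ) ^ ((1 - α) / (1 + α))⌉₊ ∧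
      ∃ P, 0 < P ∧ P ≤ 1 ∧ RapPrimeConstraints α k ⌈A * (D : ℝ) ^ ((1 - α) / (1 + α))⌉₊ D P := by
  set β := (1 - α) / (1 + α)
  set K := (k : ℝ) ^ α
  have hp : 0 < 1 - α := by linarith
  have hβ : 0 < β := by positivity
  have hK : 0 < K := by positivity
  have hexp : β * (1 + α) = 1 - α := div_mul_cancel₀ _ (by linarith)
  have hceil : Tendsto (fun D : ℕ => (⌈A * (D : ℝ) ^ β⌉₊ : ℝ)) atTop atTop :=
    tendsto_atTop_mono (fun D => Nat.le_ceil _)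
      (((tendsto_rpow_atTop hβ).const_mul_atTop hA0).comp tendsto_natCast_atTop_atTop)
  filter_upwards [hceil.eventually_ge_atTop (4 * k),
    ((tendsto_rpow_atTop h0).comp hceil).eventually_ge_atTop (4 * K / (1 - α)),
    ((tendsto_rpow_atTop (by positivity : 0 < α * β)).comp
      tendsto_natCast_atTop_atTop).eventually_ge_atTop ((1 - α) * (A + 1) / (4 * K)),
    eventually_ge_atTop 1] with D hm4k hmα hDαβ hD
  set m := ⌈A * (D : ℝ) ^ β⌉₊
  have hD1 : (1 : ℝ) ≤ D := by exact_mod_cast hD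
  have hDβ : 0 < (D : ℝ) ^ β := by positivity
  have hAm : A * (D : ℝ) ^ β ≤ m := Nat.le_ceil _
  have hDp : (D : ℝ) ^ (1 - α) = ((D : ℝ) ^ β) ^ (1 + α) := by
    rw [← rpow_mul (by positivity), hexp]
  have hkm : 4 * k ≤ m := by exact_mod_cast hm4k
  refine ⟨by omega, exists_rapPrimeConstraints_of_le h0 h1 hkm ?_ ?_ ?_⟩
  · simp only [Function.comp_apply] at hmα
    rw [div_le_iff₀ hp] at hmα
    linarith
  · have : A ^ (1 + α) * ((D : ℝ) ^ β) ^ (1 + α) ≤ (m : ℝ) ^ (1 + α) := by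
      rw [← mul_rpow hA0.le hDβ.le]; gcongr
    rw [hDp]
    nlinarith [rpow_pos_of_pos hDβ (1 + α)]
  · have hsplit : (D : ℝ) ^ (1 - α) = (D : ℝ) ^ β * (D : ℝ) ^ (α * β) := by
      rw [← rpow_add (by positivity), ← hexp]; ring_nf
    simp only [Function.comp_apply] at hDαβ
    rw [div_le_iff₀ (by positivity)] at hDαβ
    have := natCeil_mul_rpow_le hA0.le hβ.le hD1
    rw [hsplit]
    nlinarith

/-- RAP' counter requirement for heavy-tailed Zipf streams: for fixed
`0 < α < 1` and fixed `k`, `O(D^((1-α)/(1+α)))` counters suffice; i.e., there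
are `C > 0` and `D₀` such that for every `D ≥ D₀` there are a counter budget
`m ≤ C·D^((1-α)/(1+α))` and an admission probability `P` satisfying both RAP'
convergence constraints. -/
theorem rapPrime_counter_requirement (α : ℝ) (h0 : 0 < α) (h1 : α < 1)
    (k : ℕ) (hk : 0 < k) :
    ∃ C : ℝ, 0 < C ∧ ∃ D₀ : ℕ, ∀ D : ℕ, D₀ ≤ D →
      ∃ m : ℕ, k < m ∧ (m : ℝ) ≤ C * (D : ℝ) ^ ((1 - α) / (1 + α)) ∧
        ∃ P : ℝ, 0 < P ∧ P ≤ 1 ∧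
          (m : ℝ) > (k : ℝ) * P ^ (-(1 / α)) ∧
          (m : ℝ) > (k : ℝ) + (k : ℝ) ^ α *
            (zipfGamma α m - zipfGamma α k +
              P * (zipfGamma α D - zipfGamma α m)) := by
  have hp : 0 < 1 - α := by linarith
  set A := 4 * ((k : ℝ) ^ α) ^ 2 / (1 - α) + 1
  have hA1 : 1 ≤ A := le_add_of_nonneg_left (div_nonneg (by positivity) hp.le)
  have hA : 4 * ((k : ℝ) ^ α) ^ 2 < (1 - α) * A ^ (1 + α) := by
    have : A ≤ A ^ (1 + α) := by
      simpa using rpow_le_rpow_of_exponent_le hA1 (by linarith : (1 : ℝ) ≤ 1 + α)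
    rw [← div_lt_iff₀' hp]
    linarith
  obtain ⟨D₀, hD₀⟩ := eventually_atTop.mp
    ((eventually_exists_rapPrimeConstraints h0 h1 hk (by linarith) hA).and (eventually_ge_atTop 1))
  refine ⟨A + 1, by linarith, D₀, fun D hD => ?_⟩
  obtain ⟨⟨hkm, P, hP0, hP1, hm⟩, hD1⟩ := hD₀ D hD
  exact ⟨_, hkm, natCeil_mul_rpow_le (by linarith) (by positivity) (by exact_mod_cast hD1),
    P, hP0, hP1, hm⟩
end

section
/- Space Saving requirement is Ω(log D) on skew-1 Zipf streams (the negative half of Theorem 2 of the paper): for every fixed positive integer k, there exist a constant c > 0 and an integer D₀ ≥ 2 such that for all integers D ≥ D₀, every integer m > k satisfying the Space Saving convergence condition f_k > (1 − F_k)/(m − k) for the Zipf distribution with skew 1 over {1,…,D} must satisfy m ≥ c · ln D. -/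
/-!
Clearing denominators, the convergence condition says `Γ_1(D) - Γ_1(k) < (m - k)/k ≤ m`.
Since `Γ_1(D) ≥ ln D` while `Γ_1(k)` does not depend on `D`, once `ln D ≥ 2 Γ_1(k)` this
forces `m > ln D - Γ_1(k) ≥ ln D / 2`.
-/

/-- `harmonic n = Γ_1(n) = Σ_{i=1}^{n} 1/i`, the `n`-th harmonic number. -/
noncomputable def harmonicSum (n : ℕ) : ℝ :=
  ∑ i ∈ Finset.Icc 1 n, (1 : ℝ) / (i : ℝ)

lemma harmonicSum_eq_harmonic (n : ℕ) : harmonicSum n = harmonic n := by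
  simp [harmonicSum, harmonic_eq_sum_Icc, one_div]

lemma harmonicSum_pos {n : ℕ} (hn : n ≠ 0) : 0 < harmonicSum n := by
  rw [harmonicSum_eq_harmonic]
  exact_mod_cast harmonic_pos hn

lemma log_le_harmonicSum (n : ℕ) : Real.log n ≤ harmonicSum n := by
  simpa [harmonicSum_eq_harmonic] using log_le_harmonic_floor (n : ℝ) n.cast_nonneg

lemma one_div_div_gt_one_sub_div_div_iff {a b x d : ℝ} (hb : 0 < b) (hd : 0 < d) :
    (1 / x) / b > (1 - a / b) / d ↔ b - a < d / x := by
  rw [gt_iff_lt, div_lt_div_iff₀ hd hb, one_sub_div hb.ne', div_mul_cancel₀ _ hb.ne']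
  ring_nf

lemma natCast_sub_div_le (m k : ℕ) : ((m : ℝ) - k) / k ≤ m := by
  rcases Nat.eq_zero_or_pos k with rfl | hk
  · simp
  · have hk' : (1 : ℝ) ≤ k := by exact_mod_cast hk
    rw [div_le_iff₀ (by positivity)]
    nlinarith [m.cast_nonneg (α := ℝ)]

lemma le_log_of_ceil_exp_le {x : ℝ} {D : ℕ} (hD : ⌈Real.exp x⌉₊ ≤ D) : x ≤ Real.log D := by
  have hexp : Real.exp x ≤ D := (Nat.le_ceil _).trans (by exact_mod_cast hD)
  exact (Real.le_log_iff_exp_le ((Real.exp_pos x).trans_le hexp)).2 hexp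

theorem spaceSaving_lower_bound_skewOne_general (k : ℕ) :
    ∃ c : ℝ, 0 < c ∧ ∃ D₀ : ℕ, 2 ≤ D₀ ∧ ∀ D : ℕ, D₀ ≤ D → ∀ m : ℕ, k < m →
      (1 / (k : ℝ)) / harmonicSum D >
          (1 - harmonicSum k / harmonicSum D) / ((m : ℝ) - (k : ℝ)) →
        (m : ℝ) ≥ c * Real.log D := by
  refine ⟨1 / 2, by norm_num, max 2 ⌈Real.exp (2 * harmonicSum k)⌉₊, le_max_left _ _,
    fun D hD m hm hcond => ?_⟩
  have hHD : 0 < harmonicSum D := harmonicSum_pos (by omega)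
  have hmk : (0 : ℝ) < m - k := sub_pos.2 (by exact_mod_cast hm)
  have hgap := (one_div_div_gt_one_sub_div_div_iff hHD hmk).1 hcond
  have hlog : 2 * harmonicSum k ≤ Real.log D := le_log_of_ceil_exp_le (le_of_max_le_right hD)
  linarith [log_le_harmonicSum D, natCast_sub_div_le m k]

/-- Space Saving requirement is `Ω(log D)` on skew-1 Zipf streams: for fixed
`k`, there exist `c > 0` and `D₀ ≥ 2` such that for all `D ≥ D₀`, every
`m > k` satisfying the Space Saving convergence condition
`f_k > (1 - F_k)/(m - k)` (where `f_i = (1/i)/Γ_1(D)` and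
`F_r = Γ_1(r)/Γ_1(D)`) satisfies `m ≥ c · ln D`. -/
theorem spaceSaving_lower_bound_skewOne (k : ℕ) (hk : 0 < k) :
    ∃ c : ℝ, 0 < c ∧ ∃ D₀ : ℕ, 2 ≤ D₀ ∧ ∀ D : ℕ, D₀ ≤ D → ∀ m : ℕ, k < m →
      (1 / (k : ℝ)) / harmonicSum D >
          (1 - harmonicSum k / harmonicSum D) / ((m : ℝ) - (k : ℝ)) →
        (m : ℝ) ≥ c * Real.log D :=
  spaceSaving_lower_bound_skewOne_general k
end
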